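/- Let F(y) = sqrt(h(y,y)) + β(y) be a Randers norm with ‖β‖_h < 1 and let F_s(y) = sqrt(h(y,y)+β(y)²) be its symmetrization. Then the polar transform of F_s is given by F_s*(α) = sqrt(‖α‖_h² − h*(α,β)²/(1+‖β‖_h²)); in particular, in general 2F_s*(α)² ≠ F*(α)² + F*(−α)², i.e., the polar of the symmetrization differs from the symmetrization of the polar. -/

import Mathlib

/-!
The symmetrization `F_s y = √(‖y‖² + ⟪b, y⟫²)` is the pullback of the Euclidean norm of `E × ℝ`
under the injective linear map `ι y = (y, ⟪b, y⟫)`. Hence `⟪a, ·⟫` is represented for the inner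
product `⟪ι ·, ι ·⟫` by `z = a - c • b` with `c = ⟪a, b⟫ / (1 + ‖b‖²)`, and by Cauchy–Schwarz the
supremum of `⟪a, y⟫ / F_s y = ⟪ι z, ι y⟫ / ‖ι y‖` is `‖ι z‖`, attained at `y = z`; expanding gives
`‖ι z‖² = ‖a‖² - ⟪a, b⟫² / (1 + ‖b‖²)`.
-/

open scoped InnerProductSpace

noncomputable section SymmetrizedRanders

variable {E : Type*} [NormedAddCommGroup E] [InnerProductSpace ℝ E]

def randersLift (b y : E) : WithLp 2 (E × ℝ) := WithLp.toLp 2 (y, ⟪b, y⟫_ℝ)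

lemma norm_randersLift (b y : E) : ‖randersLift b y‖ = √(‖y‖ ^ 2 + ⟪b, y⟫_ℝ ^ 2) := by
  simp [WithLp.prod_norm_eq_of_L2, randersLift]

lemma inner_randersLift (b x y : E) :
    ⟪randersLift b x, randersLift b y⟫_ℝ = ⟪x, y⟫_ℝ + ⟪b, x⟫_ℝ * ⟪b, y⟫_ℝ := by
  simp [randersLift, mul_comm]

lemma randersLift_zero (b : E) : randersLift b 0 = 0 := by
  simp [randersLift]

lemma randersLift_ne_zero (b : E) {y : E} (hy : y ≠ 0) : randersLift b y ≠ 0 :=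
  fun h => hy (congrArg (fun v => (WithLp.ofLp v).1) h)

def symmRandersPolarSq (b a : E) : ℝ := ‖a‖ ^ 2 - ⟪a, b⟫_ℝ ^ 2 / (1 + ‖b‖ ^ 2)

def symmRandersDual (b a : E) : E := a - (⟪a, b⟫_ℝ / (1 + ‖b‖ ^ 2)) • b

lemma inner_symmRandersDual (b a : E) :
    ⟪b, symmRandersDual b a⟫_ℝ = ⟪a, b⟫_ℝ / (1 + ‖b‖ ^ 2) := by
  have : 1 + ‖b‖ ^ 2 ≠ 0 := by positivity
  rw [symmRandersDual, inner_sub_right, real_inner_smul_right, real_inner_self_eq_norm_sq,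
    real_inner_comm]
  field_simp
  ring

lemma inner_eq_inner_randersLift_symmRandersDual (b a y : E) :
    ⟪a, y⟫_ℝ = ⟪randersLift b (symmRandersDual b a), randersLift b y⟫_ℝ := by
  rw [inner_randersLift, inner_symmRandersDual, symmRandersDual, inner_sub_left,
    real_inner_smul_left]
  ring

lemma norm_randersLift_symmRandersDual_sq (b a : E) :
    ‖randersLift b (symmRandersDual b a)‖ ^ 2 = symmRandersPolarSq b a := by
  rw [← real_inner_self_eq_norm_sq, ← inner_eq_inner_randersLift_symmRandersDual,
    symmRandersDual, inner_sub_right, real_inner_smul_right, real_inner_self_eq_norm_sq,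
    symmRandersPolarSq]
  ring

theorem isLUB_inner_div_symmRanders [Nontrivial E] (b a : E) :
    IsLUB {q | ∃ y : E, y ≠ 0 ∧ q = ⟪a, y⟫_ℝ / √(‖y‖ ^ 2 + ⟪b, y⟫_ℝ ^ 2)}
      √(symmRandersPolarSq b a) := by
  set v := randersLift b (symmRandersDual b a)
  have hv : √(symmRandersPolarSq b a) = ‖v‖ := by
    rw [← norm_randersLift_symmRandersDual_sq, Real.sqrt_sq (norm_nonneg _)]
  have hq (y : E) :
      ⟪a, y⟫_ℝ / √(‖y‖ ^ 2 + ⟪b, y⟫_ℝ ^ 2) = ⟪v, randersLift b y⟫_ℝ / ‖randersLift b y‖ := by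
    rw [inner_eq_inner_randersLift_symmRandersDual b, norm_randersLift]
  simp only [hv, hq]
  refine IsGreatest.isLUB ⟨?_, ?_⟩
  · by_cases hz : symmRandersDual b a = 0
    · obtain ⟨y, hy⟩ := exists_ne (0 : E)
      refine ⟨y, hy, ?_⟩
      simp [v, hz, randersLift_zero]
    · refine ⟨_, hz, ?_⟩
      rw [real_inner_self_eq_norm_sq, sq,
        mul_div_cancel_right₀ _ (norm_ne_zero_iff.2 (randersLift_ne_zero b hz))]
  · rintro q ⟨y, hy, rfl⟩
    rw [div_le_iff₀ (norm_pos_iff.2 (randersLift_ne_zero b hy))]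
    exact real_inner_le_norm _ _

/-- The closed form of the polar of the Randers norm `‖y‖ + ⟪b, y⟫` for `‖b‖ < 1`. -/
def randersPolar (b a : E) : ℝ :=
  (√(⟪a, b⟫_ℝ ^ 2 + (1 - ‖b‖ ^ 2) * ‖a‖ ^ 2) - ⟪a, b⟫_ℝ) / (1 - ‖b‖ ^ 2)

lemma two_mul_symmRandersPolarSq_ne {u : E} (hu : ‖u‖ = 1) :
    2 * symmRandersPolarSq ((1 / 2 : ℝ) • u) u ≠
      randersPolar ((1 / 2 : ℝ) • u) u ^ 2 + randersPolar ((1 / 2 : ℝ) • u) (-u) ^ 2 := by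
  have hb : ‖(1 / 2 : ℝ) • u‖ = 1 / 2 := by rw [norm_smul, hu]; norm_num
  have hab : ⟪u, (1 / 2 : ℝ) • u⟫_ℝ = 1 / 2 := by
    rw [real_inner_smul_right, real_inner_self_eq_norm_sq, hu]; norm_num
  rw [symmRandersPolarSq, randersPolar, randersPolar, hb, hab, inner_neg_left, hab, norm_neg, hu]
  have h : (1 / 2 : ℝ) ^ 2 + (1 - (1 / 2) ^ 2) * 1 ^ 2 = 1 := by norm_num
  norm_num [h]

end SymmetrizedRanders

theorem stmt_18_general (n : ℕ) (hn : 1 ≤ n) (b : EuclideanSpace ℝ (Fin n))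
    (Fs : EuclideanSpace ℝ (Fin n) → ℝ)
    (hFs : ∀ y, Fs y = Real.sqrt (‖y‖ ^ 2 + (inner ℝ b y : ℝ) ^ 2)) :
    (∀ a : EuclideanSpace ℝ (Fin n),
      IsLUB {q : ℝ | ∃ y : EuclideanSpace ℝ (Fin n), y ≠ 0 ∧ q = (inner ℝ a y : ℝ) / Fs y}
        (Real.sqrt (‖a‖ ^ 2 - (inner ℝ a b : ℝ) ^ 2 / (1 + ‖b‖ ^ 2)))) ∧
    (∃ (b' a' : EuclideanSpace ℝ (Fin 2)), ‖b'‖ < 1 ∧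
      2 * (‖a'‖ ^ 2 - (inner ℝ a' b' : ℝ) ^ 2 / (1 + ‖b'‖ ^ 2)) ≠
        ((Real.sqrt ((inner ℝ a' b' : ℝ) ^ 2 + (1 - ‖b'‖ ^ 2) * ‖a'‖ ^ 2)
            - (inner ℝ a' b' : ℝ)) / (1 - ‖b'‖ ^ 2)) ^ 2 +
        ((Real.sqrt ((inner ℝ (-a') b' : ℝ) ^ 2 + (1 - ‖b'‖ ^ 2) * ‖(-a' : EuclideanSpace ℝ (Fin 2))‖ ^ 2)
            - (inner ℝ (-a') b' : ℝ)) / (1 - ‖b'‖ ^ 2)) ^ 2) := by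
  obtain rfl : Fs = fun y => √(‖y‖ ^ 2 + ⟪b, y⟫_ℝ ^ 2) := funext hFs
  have : NeZero n := ⟨by omega⟩
  refine ⟨isLUB_inner_div_symmRanders b, ?_⟩
  have hu : ‖EuclideanSpace.single (0 : Fin 2) (1 : ℝ)‖ = 1 := by simp
  refine ⟨(1 / 2 : ℝ) • EuclideanSpace.single 0 1, EuclideanSpace.single 0 1, ?_,
    two_mul_symmRandersPolarSq_ne hu⟩
  rw [norm_smul, hu]
  norm_num

/-- For a Randers norm `F y = ‖y‖ + ⟪b,y⟫` with `‖b‖ < 1` and its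
symmetrization `F_s y = √(‖y‖² + ⟪b,y⟫²)`, the polar transform of `F_s` is
`F_s* α = √(‖a‖² − ⟪a,b⟫²/(1+‖b‖²))` (covectors represented by vectors via Riesz);
in particular the polar of the symmetrization differs in general from the
symmetrization of the polar: there is an example (in dimension 2) with
`2 F_s*(a)² ≠ F*(a)² + F*(−a)²`, `F*` being the polar of `F` in its closed form. -/
theorem stmt_18 (n : ℕ) (hn : 1 ≤ n) (b : EuclideanSpace ℝ (Fin n)) (hb : ‖b‖ < 1)
    (Fs : EuclideanSpace ℝ (Fin n) → ℝ)
    (hFs : ∀ y, Fs y = Real.sqrt (‖y‖ ^ 2 + (inner ℝ b y : ℝ) ^ 2)) :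
    (∀ a : EuclideanSpace ℝ (Fin n),
      IsLUB {q : ℝ | ∃ y : EuclideanSpace ℝ (Fin n), y ≠ 0 ∧ q = (inner ℝ a y : ℝ) / Fs y}
        (Real.sqrt (‖a‖ ^ 2 - (inner ℝ a b : ℝ) ^ 2 / (1 + ‖b‖ ^ 2)))) ∧
    (∃ (b' a' : EuclideanSpace ℝ (Fin 2)), ‖b'‖ < 1 ∧
      2 * (‖a'‖ ^ 2 - (inner ℝ a' b' : ℝ) ^ 2 / (1 + ‖b'‖ ^ 2)) ≠
        ((Real.sqrt ((inner ℝ a' b' : ℝ) ^ 2 + (1 - ‖b'‖ ^ 2) * ‖a'‖ ^ 2)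
            - (inner ℝ a' b' : ℝ)) / (1 - ‖b'‖ ^ 2)) ^ 2 +
        ((Real.sqrt ((inner ℝ (-a') b' : ℝ) ^ 2 + (1 - ‖b'‖ ^ 2) * ‖(-a' : EuclideanSpace ℝ (Fin 2))‖ ^ 2)
            - (inner ℝ (-a') b' : ℝ)) / (1 - ‖b'‖ ^ 2)) ^ 2) :=
  stmt_18_general n hn b Fs hFs
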